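/- With the notation of the exact element mapping: let T be a simplex with affine parametrization F_T: T̂ → T, and let F_T^{(e)}(x̂) := F_T(x̂) + (λ*(x̂))^{r+2}(b(F_T(ŷ(x̂))) − F_T(ŷ(x̂))). If x̂ lies in the face of T̂ where λ* = 1 (i.e., all barycentric coordinates with εᵢ = 0 vanish), then ŷ(x̂) = x̂ and F_T^{(e)}(x̂) = b(F_T(x̂)). In particular F_T^{(e)} ∘ F_T^{-1} coincides with the orthogonal projection b on the corresponding face of T. -/

import Mathlib

/-! On the face, `εᵢ λᵢ = λᵢ` for every `i`, so `λ* = ∑ λᵢ = 1` and `ŷ = x̂`; the blending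
factor `(λ*)^(r+2)` is then `1` and the correction term replaces `F_T(x̂)` by `b(F_T(x̂))`. -/

open scoped BigOperators

theorem mul_eq_self_of_face {ι R : Type*} [MulZeroOneClass R] {ε lam : ι → R}
    (hε : ∀ i, ε i = 0 ∨ ε i = 1) (hface : ∀ i, ε i = 0 → lam i = 0) (i : ι) :
    ε i * lam i = lam i := by
  rcases hε i with h | h
  · rw [h, hface i h, mul_zero]
  · rw [h, one_mul]

theorem stmt12_general {d : ℕ} (r : ℕ)
    (v : Fin (d + 1) → EuclideanSpace ℝ (Fin d))
    (lam : Fin (d + 1) → ℝ)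
    (hsum : ∑ i, lam i = 1)
    (xhat : EuclideanSpace ℝ (Fin d)) (hx : xhat = ∑ i, lam i • v i)
    (ε : Fin (d + 1) → ℝ) (hε : ∀ i, ε i = 0 ∨ ε i = 1)
    (hface : ∀ i, ε i = 0 → lam i = 0)
    (lamstar : ℝ) (hls : lamstar = ∑ i, ε i * lam i)
    (yhat : EuclideanSpace ℝ (Fin d))
    (hy : yhat = lamstar⁻¹ • ∑ i, (ε i * lam i) • v i)
    (FT : EuclideanSpace ℝ (Fin d) →ᵃ[ℝ] EuclideanSpace ℝ (Fin d))
    (b : EuclideanSpace ℝ (Fin d) → EuclideanSpace ℝ (Fin d)) :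
    yhat = xhat ∧
    FT xhat + lamstar ^ (r + 2) • (b (FT yhat) - FT yhat) = b (FT xhat) := by
  have hterm := mul_eq_self_of_face hε hface
  have hlamstar : lamstar = 1 := by simp only [hls, hterm, hsum]
  have hyx : yhat = xhat := by simp only [hy, hx, hlamstar, hterm, inv_one, one_smul]
  refine ⟨hyx, ?_⟩
  rw [hyx, hlamstar, one_pow, one_smul, add_sub_cancel]

theorem stmt12 {d : ℕ} (r : ℕ) (hr : 1 ≤ r)
    (v : Fin (d + 1) → EuclideanSpace ℝ (Fin d))
    (hind : AffineIndependent ℝ v)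
    (lam : Fin (d + 1) → ℝ)
    (hnn : ∀ i, 0 ≤ lam i) (hsum : ∑ i, lam i = 1)
    (xhat : EuclideanSpace ℝ (Fin d)) (hx : xhat = ∑ i, lam i • v i)
    (ε : Fin (d + 1) → ℝ) (hε : ∀ i, ε i = 0 ∨ ε i = 1)
    (hface : ∀ i, ε i = 0 → lam i = 0)
    (lamstar : ℝ) (hls : lamstar = ∑ i, ε i * lam i)
    (yhat : EuclideanSpace ℝ (Fin d))
    (hy : yhat = lamstar⁻¹ • ∑ i, (ε i * lam i) • v i)
    (FT : EuclideanSpace ℝ (Fin d) →ᵃ[ℝ] EuclideanSpace ℝ (Fin d))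
    (b : EuclideanSpace ℝ (Fin d) → EuclideanSpace ℝ (Fin d)) :
    yhat = xhat ∧
    FT xhat + lamstar ^ (r + 2) • (b (FT yhat) - FT yhat) = b (FT xhat) :=
  stmt12_general r v lam hsum xhat hx ε hε hface lamstar hls yhat hy FT b
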